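/- Let μ be a Radon measure on ℝ^d and x ∈ ℝ^d. If Tan(μ,x) = M \ {0}, i.e. every non-zero Radon measure on ℝ^d is a tangent measure of μ at x, then μ does not satisfy the doubling condition at x: limsup_{r→0} μ(B(x,2r))/μ(B(x,r)) = ∞. -/

import Mathlib

open MeasureTheory Filter Topology Metric Set

noncomputable section

abbrev Ed (d : ℕ) := EuclideanSpace ℝ (Fin d)

/-- Weak convergence of a sequence of measures, tested against continuous
compactly supported functions. -/
def WeakTendsto {d : ℕ} (μs : ℕ → Measure (Ed d)) (ν : Measure (Ed d)) : Prop :=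
  ∀ φ : Ed d → ℝ, Continuous φ → HasCompactSupport φ →
    Tendsto (fun i => ∫ x, φ x ∂(μs i)) atTop (𝓝 (∫ x, φ x ∂ν))

/-- The measure `c • T_{x,r♯} μ`, where `T_{x,r♯}μ(A) = μ(rA + x)`. -/
def blowup {d : ℕ} (μ : Measure (Ed d)) (x : Ed d) (r c : ℝ) : Measure (Ed d) :=
  ENNReal.ofReal c • Measure.map (fun y => r⁻¹ • (y - x)) μ

/-- `ν` is a tangent measure of `μ` at `x`. -/
def IsTangentMeasure {d : ℕ} (μ : Measure (Ed d)) (x : Ed d) (ν : Measure (Ed d)) : Prop :=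
  IsLocallyFiniteMeasure ν ∧ ν ≠ 0 ∧
    ∃ r c : ℕ → ℝ, (∀ i, 0 < r i) ∧ StrictAnti r ∧ Tendsto r atTop (𝓝 0) ∧
      (∀ i, 0 < c i) ∧ WeakTendsto (fun i => blowup μ x (r i) (c i)) ν

/-!
If `μ` were doubling at `x`, then `μ (B(x, 3r)) ≤ K² μ (B(x, r))` for small `r`. Blow up along a
sequence realising the tangent measure `δ_z` with `‖z‖ = 2`: the rescaled mass of `B(z, 1) ⊆ B(0, 3)`
stays asymptotically at least `1`, while that of `B(0, 1)` tends to `0` because `δ_z` does not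
charge `B(0, 3/2)`. The doubling bound relates the two, which is absurd. Mass of balls is compared
with integrals of bump functions, to which weak convergence applies.
-/

section Bump

variable {E : Type*} [NormedAddCommGroup E] [NormedSpace ℝ E] [HasContDiffBump E]
  [MeasurableSpace E] [OpensMeasurableSpace E]

lemma measure_le_lintegral_bump {ν : Measure E} {a : E} (f : ContDiffBump a) :
    ν (closedBall a f.rIn) ≤ ∫⁻ y, ENNReal.ofReal (f y) ∂ν := by
  rw [← lintegral_indicator_one measurableSet_closedBall]
  refine lintegral_mono fun y => ?_
  by_cases hy : y ∈ closedBall a f.rIn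
  · simp [indicator_of_mem hy, f.one_of_mem_closedBall hy]
  · simp [indicator_of_notMem hy]

lemma lintegral_bump_le_measure {ν : Measure E} {a : E} (f : ContDiffBump a) :
    ∫⁻ y, ENNReal.ofReal (f y) ∂ν ≤ ν (closedBall a f.rOut) := by
  rw [← lintegral_indicator_one measurableSet_closedBall]
  refine lintegral_mono fun y => ?_
  by_cases hy : y ∈ closedBall a f.rOut
  · simpa [indicator_of_mem hy] using f.le_one
  · have hy' : y ∉ ball a f.rOut := fun h => hy (ball_subset_closedBall h)
    rw [← f.support_eq, Function.notMem_support] at hy'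
    simp [hy']

end Bump

section WeakConvergence

variable {d : ℕ}

lemma WeakTendsto.tendsto_lintegral {νs : ℕ → Measure (Ed d)} {ν : Measure (Ed d)}
    (h : WeakTendsto νs ν) (hνs : ∀ i, IsFiniteMeasureOnCompacts (νs i))
    [IsFiniteMeasureOnCompacts ν] {φ : Ed d → ℝ} (hφ : Continuous φ)
    (hφs : HasCompactSupport φ) (hφ0 : 0 ≤ φ) :
    Tendsto (fun i => ∫⁻ y, ENNReal.ofReal (φ y) ∂νs i) atTop
      (𝓝 (∫⁻ y, ENNReal.ofReal (φ y) ∂ν)) := by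
  have hlin : ∀ (η : Measure (Ed d)) [IsFiniteMeasureOnCompacts η],
      ∫⁻ y, ENNReal.ofReal (φ y) ∂η = ENNReal.ofReal (∫ y, φ y ∂η) := fun η _ =>
    (ofReal_integral_eq_lintegral_ofReal (hφ.integrable_of_hasCompactSupport hφs)
      (Eventually.of_forall hφ0)).symm
  simp_rw [hlin]
  exact ENNReal.tendsto_ofReal (h φ hφ hφs)

lemma WeakTendsto.measure_closedBall_le_liminf {νs : ℕ → Measure (Ed d)}
    {ν : Measure (Ed d)} (h : WeakTendsto νs ν) (hνs : ∀ i, IsFiniteMeasureOnCompacts (νs i))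
    [IsFiniteMeasureOnCompacts ν] (a : Ed d) {r R : ℝ} (hr : 0 < r) (hrR : r < R) :
    ν (closedBall a r) ≤ liminf (fun i => νs i (closedBall a R)) atTop := by
  let f : ContDiffBump a := ⟨r, R, hr, hrR⟩
  calc ν (closedBall a r) ≤ ∫⁻ y, ENNReal.ofReal (f y) ∂ν := measure_le_lintegral_bump f
    _ = liminf (fun i => ∫⁻ y, ENNReal.ofReal (f y) ∂νs i) atTop :=
      ((h.tendsto_lintegral hνs f.continuous f.hasCompactSupport fun _ => f.nonneg).liminf_eq).symm
    _ ≤ liminf (fun i => νs i (closedBall a R)) atTop :=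
      liminf_le_liminf (Eventually.of_forall fun _ => lintegral_bump_le_measure f)

lemma WeakTendsto.limsup_measure_closedBall_le {νs : ℕ → Measure (Ed d)}
    {ν : Measure (Ed d)} (h : WeakTendsto νs ν) (hνs : ∀ i, IsFiniteMeasureOnCompacts (νs i))
    [IsFiniteMeasureOnCompacts ν] (a : Ed d) {r R : ℝ} (hr : 0 < r) (hrR : r < R) :
    limsup (fun i => νs i (closedBall a r)) atTop ≤ ν (closedBall a R) := by
  let f : ContDiffBump a := ⟨r, R, hr, hrR⟩
  calc limsup (fun i => νs i (closedBall a r)) atTop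
      ≤ limsup (fun i => ∫⁻ y, ENNReal.ofReal (f y) ∂νs i) atTop :=
        limsup_le_limsup (Eventually.of_forall fun _ => measure_le_lintegral_bump f)
    _ = ∫⁻ y, ENNReal.ofReal (f y) ∂ν :=
      (h.tendsto_lintegral hνs f.continuous f.hasCompactSupport fun _ => f.nonneg).limsup_eq
    _ ≤ ν (closedBall a R) := lintegral_bump_le_measure f

end WeakConvergence

section Blowup

variable {d : ℕ}

lemma blowup_closedBall (μ : Measure (Ed d)) (x : Ed d) {r : ℝ} (hr : 0 < r) (c R : ℝ) :
    blowup μ x r c (closedBall 0 R) = ENNReal.ofReal c * μ (closedBall x (R * r)) := by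
  have hpre : (fun y => r⁻¹ • (y - x)) ⁻¹' closedBall 0 R = closedBall x (R * r) := by
    ext y
    simp only [mem_preimage, mem_closedBall, dist_eq_norm, sub_zero, norm_smul,
      Real.norm_eq_abs, abs_inv, abs_of_pos hr, inv_mul_le_iff₀ hr, mul_comm R r]
  rw [blowup, Measure.smul_apply, Measure.map_apply (by fun_prop) measurableSet_closedBall,
    hpre, smul_eq_mul]

lemma isFiniteMeasureOnCompacts_blowup (μ : Measure (Ed d)) [IsFiniteMeasureOnCompacts μ]
    (x : Ed d) {r : ℝ} (hr : 0 < r) (c : ℝ) : IsFiniteMeasureOnCompacts (blowup μ x r c) where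
  lt_top_of_isCompact {k} hk := by
    obtain ⟨R, hkR⟩ := hk.isBounded.subset_closedBall 0
    calc blowup μ x r c k ≤ blowup μ x r c (closedBall 0 R) := measure_mono hkR
      _ < ⊤ := by
        rw [blowup_closedBall μ x hr]
        exact ENNReal.mul_lt_top ENNReal.ofReal_lt_top measure_closedBall_lt_top

end Blowup

section Doubling

variable {X : Type*} [PseudoMetricSpace X] [MeasurableSpace X]

lemma exists_eventually_measure_closedBall_two_mul_le [ProperSpace X] (μ : Measure X)
    [IsFiniteMeasureOnCompacts μ] (x : X)
    (h : limsup (fun r : ℝ => μ (closedBall x (2 * r)) / μ (closedBall x r)) (𝓝[>] 0) ≠ ⊤) :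
    ∃ K : NNReal, ∀ᶠ r in 𝓝[>] (0 : ℝ),
      μ (closedBall x (2 * r)) ≤ K * μ (closedBall x r) := by
  set L := limsup (fun r : ℝ => μ (closedBall x (2 * r)) / μ (closedBall x r)) (𝓝[>] 0)
  have hlt : L < (L.toNNReal + 1 : NNReal) := by
    rw [ENNReal.coe_add, ENNReal.coe_toNNReal h, ENNReal.coe_one]
    exact ENNReal.lt_add_right h one_ne_zero
  refine ⟨L.toNNReal + 1, (eventually_lt_of_limsup_lt hlt).mono fun r hr => ?_⟩
  exact (ENNReal.div_le_iff_le_mul (Or.inr ENNReal.coe_ne_top)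
    (Or.inl measure_closedBall_lt_top.ne)).1 hr.le

lemma eventually_measure_closedBall_three_mul_le {μ : Measure X} {x : X} {K : ENNReal}
    (h : ∀ᶠ r in 𝓝[>] (0 : ℝ), μ (closedBall x (2 * r)) ≤ K * μ (closedBall x r)) :
    ∀ᶠ r in 𝓝[>] (0 : ℝ), μ (closedBall x (3 * r)) ≤ K ^ 2 * μ (closedBall x r) := by
  have htwo : Tendsto (fun r : ℝ => 2 * r) (𝓝[>] 0) (𝓝[>] 0) := by
    simpa using TendstoNhdsWithinIoi.const_mul two_pos (tendsto_id (x := 𝓝[>] (0 : ℝ)))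
  filter_upwards [h, htwo.eventually h, self_mem_nhdsWithin] with r h₁ h₂ (hr : 0 < r)
  calc μ (closedBall x (3 * r)) ≤ μ (closedBall x (2 * (2 * r))) :=
        measure_mono (closedBall_subset_closedBall (by linarith))
    _ ≤ K * (K * μ (closedBall x r)) := h₂.trans (by gcongr)
    _ = K ^ 2 * μ (closedBall x r) := by rw [sq, mul_assoc]

end Doubling

/-- if every non-zero Radon measure on ℝ^d is a tangent measure of `μ`
at `x`, then the doubling condition fails at `x`:
`limsup_{r→0} μ(B(x,2r))/μ(B(x,r)) = ∞`. -/
theorem stmt_15 (d : ℕ) (hd : 0 < d) (μ : Measure (Ed d))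
    (hRadon : IsLocallyFiniteMeasure μ) (x : Ed d)
    (htan : ∀ ν : Measure (Ed d), IsLocallyFiniteMeasure ν → ν ≠ 0 →
      IsTangentMeasure μ x ν) :
    limsup (fun r : ℝ => μ (closedBall x (2 * r)) / μ (closedBall x r))
      (𝓝[>] (0:ℝ)) = ⊤ := by
  by_contra hlim
  obtain ⟨K, hK⟩ := exists_eventually_measure_closedBall_two_mul_le μ x hlim
  have : Nonempty (Fin d) := ⟨⟨0, hd⟩⟩
  obtain ⟨z, hz⟩ := exists_norm_eq (Ed d) zero_le_two
  obtain ⟨-, -, r, c, hr, -, hr0, -, hweak⟩ :=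
    htan (Measure.dirac z) inferInstance Measure.dirac_ne_zero
  set νs := fun i => blowup μ x (r i) (c i)
  have hνs i := isFiniteMeasureOnCompacts_blowup μ x (hr i) (c i)
  have hnear : 1 ≤ liminf (fun i => νs i (closedBall z 1)) atTop := by
    simpa using hweak.measure_closedBall_le_liminf hνs z (r := 1 / 2) (by norm_num) (by norm_num)
  have hfar : limsup (fun i => νs i (closedBall 0 1)) atTop = 0 := by
    have hz' : z ∉ closedBall 0 (3 / 2) := by simp [hz]; norm_num
    simpa [hz'] using
      hweak.limsup_measure_closedBall_le hνs 0 one_pos (by norm_num : (1 : ℝ) < 3 / 2)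
  have hr' : Tendsto r atTop (𝓝[>] 0) := tendsto_nhdsWithin_iff.2 ⟨hr0, .of_forall hr⟩
  have hcompare : ∀ᶠ i in atTop, νs i (closedBall z 1) ≤ K ^ 2 * νs i (closedBall 0 1) := by
    filter_upwards [hr'.eventually (eventually_measure_closedBall_three_mul_le hK)] with i hi
    calc νs i (closedBall z 1) ≤ νs i (closedBall 0 3) :=
          measure_mono (closedBall_subset_closedBall' (by simp [hz]; norm_num))
      _ ≤ K ^ 2 * νs i (closedBall 0 1) := by
          simp only [νs, blowup_closedBall μ x (hr i), one_mul]
          rw [mul_left_comm]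
          gcongr
  refine (zero_lt_one' ENNReal).not_ge ?_
  calc (1 : ENNReal) ≤ liminf (fun i => K ^ 2 * νs i (closedBall 0 1)) atTop :=
        hnear.trans (liminf_le_liminf hcompare)
    _ ≤ limsup (fun i => K ^ 2 * νs i (closedBall 0 1)) atTop := liminf_le_limsup
    _ = 0 := by rw [ENNReal.limsup_const_mul_of_ne_top (by simp), hfar, mul_zero]

end
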